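/- Attaching a new leaf vertex to the end of the pendant path of the kite graph Ki(n−1,k) (for n−1 ≥ k+2, k ≥ 2) creates exactly one new copy of P₂, exactly one new copy of P₃, and exactly one new copy of P₄, and no new copies of any other generalized book graph B_t(p,q) with 2t+p+q ≥ 3 and (t,p,q) ≠ (0,1,1). -/

import Mathlib

open SimpleGraph Finset

attribute [local instance] Classical.propDecidable

/-- `copyCountSubgraphs H G` is the number of (not necessarily induced) subgraphs of `G`
isomorphic to `H`. -/
noncomputable def copyCountSubgraphs {α β : Type*} (H : SimpleGraph α) (G : SimpleGraph β) : ℕ :=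
  Nat.card {G' : G.Subgraph // Nonempty (G'.coe ≃g H)}

/-- The kite graph `Ki(n,k)`: a clique on the vertices `0, …, k−1` together with the path
`k−1, k, k+1, …, n−1` (so the path on the `n−k` remaining vertices is attached by an edge
to the clique vertex `k−1`). -/
def kiteGraph (n k : ℕ) : SimpleGraph (Fin n) :=
  SimpleGraph.fromRel
    (fun i j => ((i : ℕ) < k ∧ (j : ℕ) < k) ∨ ((j : ℕ) = (i : ℕ) + 1 ∧ k ≤ (j : ℕ)))

/-- The generalized book graph `B_t(p,q)`: rootlets `inl 0` and `inl 1` are adjacent,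
`t` page vertices are adjacent to both rootlets, `p` leaves are adjacent to rootlet
`inl 0` and `q` leaves are adjacent to rootlet `inl 1`. -/
def bookGraph (t p q : ℕ) : SimpleGraph (Fin 2 ⊕ (Fin t ⊕ Fin p ⊕ Fin q)) :=
  SimpleGraph.fromRel (fun a b =>
    match a, b with
    | Sum.inl _, Sum.inl _ => True
    | Sum.inl _, Sum.inr (Sum.inl _) => True
    | Sum.inl u, Sum.inr (Sum.inr (Sum.inl _)) => u = 0
    | Sum.inl u, Sum.inr (Sum.inr (Sum.inr _)) => u = 1
    | _, _ => False)

instance {V : Type*} [Finite V] (G : SimpleGraph V) : Finite G.Subgraph := by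
  apply Finite.of_injective (fun H => (H.verts, H.Adj))
  intro a b h
  exact SimpleGraph.Subgraph.ext (congrArg Prod.fst h) (congrArg Prod.snd h)

section Aux
variable {n k : ℕ}

lemma kite_adj {a b : Fin n} :
    (kiteGraph n k).Adj a b ↔ (a:ℕ) ≠ (b:ℕ) ∧
      (((a:ℕ) < k ∧ (b:ℕ) < k) ∨ ((b:ℕ) = (a:ℕ) + 1 ∧ k ≤ (b:ℕ)) ∨
        ((a:ℕ) = (b:ℕ) + 1 ∧ k ≤ (a:ℕ))) := by
  simp only [kiteGraph, fromRel_adj, ne_eq, Fin.ext_iff]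
  tauto

lemma kite_adj_high {a b : Fin n} (h : (kiteGraph n k).Adj a b) (ha : k ≤ (a:ℕ)) :
    (b:ℕ) = (a:ℕ) + 1 ∨ (b:ℕ) + 1 = (a:ℕ) := by
  rw [kite_adj] at h; omega

/-- cast from `Fin (n-1)` to `Fin n`. -/
def kcast : Fin (n-1) → Fin n := Fin.castLE (Nat.sub_le n 1)

lemma kcast_val (i : Fin (n-1)) : ((kcast i : Fin n) : ℕ) = (i : ℕ) := rfl

lemma kcast_inj : Function.Injective (kcast (n := n)) := Fin.castLE_injective _

lemma kite_adj_cast {i j : Fin (n-1)} :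
    (kiteGraph n k).Adj (kcast i) (kcast j) ↔ (kiteGraph (n-1) k).Adj i j := by
  simp only [kite_adj, kcast_val]

/-- lift a subgraph of the smaller kite to the bigger kite. -/
def liftSub (G1 : (kiteGraph (n-1) k).Subgraph) : (kiteGraph n k).Subgraph where
  verts := kcast '' G1.verts
  Adj a b := ∃ i j, G1.Adj i j ∧ kcast i = a ∧ kcast j = b
  adj_sub := by
    rintro a b ⟨i, j, hij, rfl, rfl⟩
    exact kite_adj_cast.2 (G1.adj_sub hij)
  edge_vert := by
    rintro a b ⟨i, j, hij, rfl, rfl⟩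
    exact ⟨i, G1.edge_vert hij, rfl⟩
  symm := ⟨by
    rintro a b ⟨i, j, hij, rfl, rfl⟩
    exact ⟨j, i, hij.symm, rfl, rfl⟩⟩

def restrictSub (G0 : (kiteGraph n k).Subgraph) : (kiteGraph (n-1) k).Subgraph where
  verts := kcast ⁻¹' G0.verts
  Adj i j := G0.Adj (kcast i) (kcast j)
  adj_sub := fun h => kite_adj_cast.1 (G0.adj_sub h)
  edge_vert := fun h => G0.edge_vert h
  symm := ⟨fun _ _ h => h.symm⟩

lemma restrict_lift (G1 : (kiteGraph (n-1) k).Subgraph) : restrictSub (liftSub G1) = G1 := by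
  apply SimpleGraph.Subgraph.ext
  · exact Set.preimage_image_eq _ kcast_inj
  · ext i j
    constructor
    · rintro ⟨i', j', h, hi, hj⟩
      rwa [kcast_inj hi, kcast_inj hj] at h
    · intro h; exact ⟨i, j, h, rfl, rfl⟩

lemma lift_restrict (hn : 1 ≤ n) (G0 : (kiteGraph n k).Subgraph)
    (hl : (⟨n-1, by omega⟩ : Fin n) ∉ G0.verts) : liftSub (restrictSub G0) = G0 := by
  have hrange : ∀ a : Fin n, a ∈ G0.verts → ∃ i : Fin (n-1), kcast i = a := by
    intro a ha
    have hv : (a : ℕ) < n - 1 := by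
      rcases lt_or_eq_of_le (Nat.lt_succ_iff.mp (by omega : (a:ℕ) < (n-1) + 1)) with h | h
      · exact h
      · exact absurd ha (by rwa [show a = (⟨n-1, by omega⟩ : Fin n) from Fin.ext h])
    exact ⟨⟨a, hv⟩, Fin.ext rfl⟩
  apply SimpleGraph.Subgraph.ext
  · ext a
    constructor
    · rintro ⟨i, hi, rfl⟩; exact hi
    · intro ha
      obtain ⟨i, rfl⟩ := hrange a ha
      exact ⟨i, ha, rfl⟩
  · ext a b
    constructor
    · rintro ⟨i, j, h, rfl, rfl⟩; exact h
    · intro h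
      obtain ⟨i, rfl⟩ := hrange a (G0.edge_vert h)
      obtain ⟨j, rfl⟩ := hrange b (G0.edge_vert h.symm)
      exact ⟨i, j, h, rfl, rfl⟩

lemma lift_adj_cast (G1 : (kiteGraph (n-1) k).Subgraph) {i j : Fin (n-1)} :
    (liftSub (k := k) G1).Adj (kcast i) (kcast j) ↔ G1.Adj i j := by
  constructor
  · rintro ⟨i', j', h, hi, hj⟩
    rwa [kcast_inj hi, kcast_inj hj] at h
  · intro h; exact ⟨i, j, h, rfl, rfl⟩

lemma last_not_mem_lift (hn : 1 ≤ n) (G1 : (kiteGraph (n-1) k).Subgraph) :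
    (⟨n-1, by omega⟩ : Fin n) ∉ (liftSub G1).verts := by
  rintro ⟨i, _, hi⟩
  have := congrArg Fin.val hi
  simp only [kcast_val] at this
  omega

/-- the graph iso between a lifted subgraph and the original. -/
noncomputable def liftIso (G1 : (kiteGraph (n-1) k).Subgraph) :
    G1.coe ≃g (liftSub (k := k) G1).coe where
  toFun v := ⟨kcast v.1, ⟨v.1, v.2, rfl⟩⟩
  invFun w := ⟨⟨(w.1 : ℕ), by obtain ⟨i, _, hi⟩ := w.2; rw [← hi, kcast_val]; exact i.2⟩, by
    obtain ⟨i, hi, hieq⟩ := w.2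
    exact Set.mem_of_eq_of_mem (Fin.ext (congrArg Fin.val hieq).symm) hi⟩
  left_inv v := by apply Subtype.ext; apply Fin.ext; rfl
  right_inv w := by apply Subtype.ext; apply Fin.ext; rfl
  map_rel_iff' := by
    intro v w
    simp only [Equiv.coe_fn_mk, SimpleGraph.Subgraph.coe_adj]
    exact lift_adj_cast G1

end Aux

section Count
variable {n k : ℕ} {γ : Type*}

noncomputable def avoidEquiv (hn : 1 ≤ n) (H : SimpleGraph γ) :
    {G0 : (kiteGraph n k).Subgraph // Nonempty (G0.coe ≃g H) ∧
        (⟨n-1, by omega⟩ : Fin n) ∉ G0.verts} ≃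
      {G1 : (kiteGraph (n-1) k).Subgraph // Nonempty (G1.coe ≃g H)} where
  toFun x := ⟨restrictSub x.1, by
    obtain ⟨⟨φ⟩, hl⟩ := x.2
    have e := lift_restrict hn x.1 hl
    have ψ := liftIso (k := k) (restrictSub x.1)
    rw [e] at ψ
    exact ⟨(ψ.trans φ)⟩⟩
  invFun y := ⟨liftSub y.1, by
    obtain ⟨φ⟩ := y.2
    exact ⟨((liftIso y.1).symm.trans φ)⟩, last_not_mem_lift hn y.1⟩
  left_inv x := Subtype.ext (lift_restrict hn x.1 x.2.2)
  right_inv y := Subtype.ext (restrict_lift y.1)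

lemma copyCount_split (hn : 1 ≤ n) (H : SimpleGraph γ) :
    copyCountSubgraphs H (kiteGraph n k) = copyCountSubgraphs H (kiteGraph (n-1) k) +
      Nat.card {G0 : (kiteGraph n k).Subgraph // Nonempty (G0.coe ≃g H) ∧
        (⟨n-1, by omega⟩ : Fin n) ∈ G0.verts} := by
  unfold copyCountSubgraphs
  have e1 : {G' : (kiteGraph n k).Subgraph // Nonempty (G'.coe ≃g H)} ≃
      {G0 : (kiteGraph n k).Subgraph // Nonempty (G0.coe ≃g H) ∧
        (⟨n-1, by omega⟩ : Fin n) ∉ G0.verts} ⊕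
      {G0 : (kiteGraph n k).Subgraph // Nonempty (G0.coe ≃g H) ∧
        (⟨n-1, by omega⟩ : Fin n) ∈ G0.verts} := by
    refine (Equiv.sumCompl
      (fun x : {G' : (kiteGraph n k).Subgraph // Nonempty (G'.coe ≃g H)} =>
        (⟨n-1, by omega⟩ : Fin n) ∉ x.1.verts)).symm.trans
      (Equiv.sumCongr
        (Equiv.subtypeSubtypeEquivSubtypeInter
          (fun G0 : (kiteGraph n k).Subgraph => Nonempty (G0.coe ≃g H))
          (fun G0 => (⟨n-1, by omega⟩ : Fin n) ∉ G0.verts))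
        ((Equiv.subtypeEquivRight (fun x => not_not)).trans
          (Equiv.subtypeSubtypeEquivSubtypeInter
            (fun G0 : (kiteGraph n k).Subgraph => Nonempty (G0.coe ≃g H))
            (fun G0 => (⟨n-1, by omega⟩ : Fin n) ∈ G0.verts))))
  rw [Nat.card_congr e1, Nat.card_sum, Nat.card_congr (avoidEquiv hn H)]

end Count

section Tail
variable {n k : ℕ}

def tailSub (n k m : ℕ) : (kiteGraph n k).Subgraph where
  verts := {v : Fin n | n - m ≤ (v : ℕ)}
  Adj a b := (kiteGraph n k).Adj a b ∧ n - m ≤ (a:ℕ) ∧ n - m ≤ (b:ℕ)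
  adj_sub h := h.1
  edge_vert h := h.2.1
  symm := ⟨fun a b h => ⟨h.1.symm, h.2.2, h.2.1⟩⟩

lemma tailSub_adj {m : ℕ} {a b : Fin n} :
    (tailSub n k m).Adj a b ↔
      (kiteGraph n k).Adj a b ∧ n - m ≤ (a:ℕ) ∧ n - m ≤ (b:ℕ) := Iff.rfl

lemma mem_tailSub {m : ℕ} {v : Fin n} : v ∈ (tailSub n k m).verts ↔ n - m ≤ (v:ℕ) := Iff.rfl

noncomputable def tailIso (hk : 1 ≤ k) {m : ℕ} (hm : 1 ≤ m) (hkm : k + m ≤ n + 1) :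
    (tailSub n k m).coe ≃g pathGraph m where
  toFun v := ⟨(v.1 : ℕ) - (n - m), by have h1 := v.1.isLt; have h2 := v.2; omega⟩
  invFun i := ⟨⟨n - m + (i : ℕ), by have := i.isLt; omega⟩, by
    simp only [mem_tailSub]; omega⟩
  left_inv v := by
    apply Subtype.ext; apply Fin.ext
    have h1 := v.1.isLt; have h2 := v.2
    simp only [mem_tailSub] at h2
    simp only []
    omega
  right_inv i := by
    apply Fin.ext
    have := i.isLt
    simp only []
    omega
  map_rel_iff' := by
    intro v w
    have h1 := v.1.isLt; have h1' := w.1.isLt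
    have h2 := v.2; have h2' := w.2
    simp only [mem_tailSub] at h2 h2'
    simp only [Equiv.coe_fn_mk, SimpleGraph.Subgraph.coe_adj, pathGraph_adj,
      tailSub_adj, kite_adj]
    omega

def pathRev (m : ℕ) : pathGraph m ≃g pathGraph m where
  toFun i := ⟨m - 1 - (i : ℕ), by have := i.isLt; omega⟩
  invFun i := ⟨m - 1 - (i : ℕ), by have := i.isLt; omega⟩
  left_inv i := by apply Fin.ext; have := i.isLt; simp only []; omega
  right_inv i := by apply Fin.ext; have := i.isLt; simp only []; omega
  map_rel_iff' := by
    intro a b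
    have := a.isLt; have := b.isLt
    simp only [Equiv.coe_fn_mk, pathGraph_adj]
    omega

lemma path_unique (hk : 2 ≤ k) (hn : k + 3 ≤ n) {m : ℕ} (hm : 2 ≤ m) (hkm : k + m ≤ n + 1)
    (G0 : (kiteGraph n k).Subgraph) (f : G0.coe ≃g pathGraph m)
    (hL : (⟨n-1, by omega⟩ : Fin n) ∈ G0.verts) : G0 = tailSub n k m := by
  have hm0 : 0 < m := by omega
  set L : G0.verts := ⟨⟨n-1, by omega⟩, hL⟩ with hLdef
  -- reduce to the case where f maps the last vertex to the endpoint 0 of the path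
  suffices aux : ∀ g : G0.coe ≃g pathGraph m, g L = ⟨0, hm0⟩ → G0 = tailSub n k m by
    -- the last vertex must be an endpoint of the path
    have hnb : ∀ v w : G0.verts, G0.Adj ↑v ↑w → ((v : Fin n) : ℕ) = n - 1 →
        ((w : Fin n) : ℕ) = n - 2 := by
      intro v w hvw hv
      have h := kite_adj_high (k := k) (G0.adj_sub hvw) (by omega)
      have := (w : Fin n).isLt
      omega
    have hend : ((f L : Fin m) : ℕ) = 0 ∨ ((f L : Fin m) : ℕ) = m - 1 := by
      by_contra hcon
      push_neg at hcon
      have hr := (f L).isLt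
      have hp1 : ((f L : Fin m) : ℕ) - 1 < m := by omega
      have hp2 : ((f L : Fin m) : ℕ) + 1 < m := by omega
      set i1 : Fin m := ⟨((f L : Fin m) : ℕ) - 1, hp1⟩ with hi1
      set i2 : Fin m := ⟨((f L : Fin m) : ℕ) + 1, hp2⟩ with hi2
      have ha1 : (pathGraph m).Adj i1 (f L) :=
        pathGraph_adj.2 (Or.inl (show ((f L : Fin m) : ℕ) - 1 + 1 = ((f L : Fin m) : ℕ) by omega))
      have ha2 : (pathGraph m).Adj i2 (f L) :=
        pathGraph_adj.2 (Or.inr rfl)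
      have hb1 : G0.coe.Adj (f.symm i1) L := by
        have := f.symm.map_adj_iff.2 ha1
        rwa [RelIso.symm_apply_apply] at this
      have hb2 : G0.coe.Adj (f.symm i2) L := by
        have := f.symm.map_adj_iff.2 ha2
        rwa [RelIso.symm_apply_apply] at this
      rw [SimpleGraph.Subgraph.coe_adj] at hb1 hb2
      have e1 := hnb _ _ hb1.symm rfl
      have e2 := hnb _ _ hb2.symm rfl
      have heq : f.symm i1 = f.symm i2 := Subtype.ext (Fin.ext (by omega))
      have := congrArg Fin.val (f.symm.injective heq)
      rw [hi1, hi2] at this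
      simp only [Fin.val_mk] at this
      omega
    rcases hend with h | h
    · exact aux f (Fin.ext h)
    · refine aux (f.trans (pathRev m)) ?_
      apply Fin.ext
      show m - 1 - ((f L : Fin m) : ℕ) = 0
      omega
  intro g hg0
  -- the chain of vertices
  have key : ∀ j, ∀ hj : j < m, ((g.symm ⟨j, hj⟩ : G0.verts) : Fin n) = (n - 1 - j : ℕ) := by
    intro j
    induction j using Nat.strong_induction_on with
    | _ j IH =>
      intro hj
      match j with
      | 0 =>
        have h1 : (⟨0, hj⟩ : Fin m) = g L := by rw [hg0]
        have h2 : g.symm ⟨0, hj⟩ = L := by rw [h1]; exact RelIso.symm_apply_apply g L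
        rw [h2]
        rfl
      | (j+1) =>
        have hjm : j < m := by omega
        have hvj := IH j (by omega) hjm
        have hadj : (pathGraph m).Adj ⟨j+1, hj⟩ ⟨j, hjm⟩ :=
          pathGraph_adj.2 (Or.inr rfl)
        have hcadj := g.symm.map_adj_iff.2 hadj
        rw [SimpleGraph.Subgraph.coe_adj] at hcadj
        have hkite := kite_adj_high (k := k) (G0.adj_sub hcadj.symm) (by rw [hvj]; omega)
        rw [hvj] at hkite
        have hlt := ((g.symm ⟨j+1, hj⟩ : G0.verts) : Fin n).isLt
        rcases hkite with h | h
        · -- value n - j : impossible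
          match j with
          | 0 => omega
          | (j'+1) =>
            have hvj' := IH j' (by omega) (by omega)
            have heq : g.symm ⟨j'+1+1, hj⟩ = g.symm ⟨j', by omega⟩ :=
              Subtype.ext (Fin.ext (by omega))
            have := congrArg Fin.val (g.symm.injective heq)
            simp only [Fin.val_mk] at this
            omega
        · omega
  have hvsub : ∀ v : G0.verts, n - m ≤ ((v : Fin n) : ℕ) := by
    intro v
    have hgv : g.symm (g v) = v := RelIso.symm_apply_apply g v
    have hlt := (g v).isLt
    have := key ((g v : Fin m) : ℕ) (by omega)
    rw [show (⟨((g v : Fin m) : ℕ), by omega⟩ : Fin m) = g v from Fin.ext rfl, hgv] at this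
    omega
  have hvmem : ∀ x : Fin n, n - m ≤ (x : ℕ) → x ∈ G0.verts := by
    intro x hx
    have hxl := x.isLt
    have hj : n - 1 - (x : ℕ) < m := by omega
    have := key (n - 1 - (x : ℕ)) hj
    have hxe : ((g.symm ⟨n - 1 - (x : ℕ), hj⟩ : G0.verts) : Fin n) = x := by
      apply Fin.ext; rw [this]; omega
    exact Set.mem_of_eq_of_mem hxe.symm (g.symm ⟨n - 1 - (x : ℕ), hj⟩).2
  -- adjacency: consecutive pairs in the tail are adjacent in G0
  have hstep : ∀ x y : Fin n, n - m ≤ (x : ℕ) → (x : ℕ) + 1 = (y : ℕ) → G0.Adj x y := by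
    intro x y hx hxy
    have hyl := y.isLt
    have hj1 : 1 ≤ n - 1 - (x : ℕ) := by omega
    have hj2 : n - 1 - (x : ℕ) < m := by omega
    have hj3 : n - 1 - (x : ℕ) - 1 < m := by omega
    set i2 : Fin m := ⟨n - 1 - (x : ℕ), hj2⟩ with hi2
    set i3 : Fin m := ⟨n - 1 - (x : ℕ) - 1, hj3⟩ with hi3
    have hadj : (pathGraph m).Adj i2 i3 :=
      pathGraph_adj.2 (Or.inr (show (n - 1 - (x : ℕ) - 1) + 1 = n - 1 - (x : ℕ) by omega))
    have hcadj := g.symm.map_adj_iff.2 hadj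
    rw [SimpleGraph.Subgraph.coe_adj] at hcadj
    have e1 := key (n - 1 - (x : ℕ)) hj2
    have e2 := key (n - 1 - (x : ℕ) - 1) hj3
    have ex : ((g.symm i2 : G0.verts) : Fin n) = x := by
      apply Fin.ext; rw [hi2, e1]; omega
    have ey : ((g.symm i3 : G0.verts) : Fin n) = y := by
      apply Fin.ext; rw [hi3, e2]; omega
    rwa [ex, ey] at hcadj
  apply SimpleGraph.Subgraph.ext
  · ext v
    simp only [mem_tailSub]
    exact ⟨fun hv => hvsub ⟨v, hv⟩, hvmem v⟩
  · ext a b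
    rw [tailSub_adj]
    constructor
    · intro h
      exact ⟨G0.adj_sub h, hvsub ⟨a, G0.edge_vert h⟩, hvsub ⟨b, G0.edge_vert h.symm⟩⟩
    · rintro ⟨hadj, ha, hb⟩
      rw [kite_adj] at hadj
      have hal := a.isLt; have hbl := b.isLt
      have : (a : ℕ) + 1 = (b : ℕ) ∨ (b : ℕ) + 1 = (a : ℕ) := by omega
      rcases this with h | h
      · exact hstep a b ha h
      · exact (hstep b a hb h).symm

end Tail

section PathCount
variable {n k : ℕ}

lemma path_count (hk : 2 ≤ k) (hn : k + 3 ≤ n) {m : ℕ} (hm : 2 ≤ m) (hkm : k + m ≤ n + 1) :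
    copyCountSubgraphs (pathGraph m) (kiteGraph n k) =
      copyCountSubgraphs (pathGraph m) (kiteGraph (n-1) k) + 1 := by
  rw [copyCount_split (by omega : 1 ≤ n) (pathGraph m)]
  congr 1
  rw [Nat.card_eq_one_iff_unique]
  constructor
  · constructor
    rintro ⟨G0, hiso0, hm0⟩ ⟨G1, hiso1, hm1⟩
    obtain ⟨f0⟩ := hiso0
    obtain ⟨f1⟩ := hiso1
    exact Subtype.ext ((path_unique hk hn hm hkm G0 f0 hm0).trans
      (path_unique hk hn hm hkm G1 f1 hm1).symm)
  · exact ⟨⟨tailSub n k m, ⟨tailIso (by omega) (by omega) hkm⟩,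
      mem_tailSub.2 (show n - m ≤ n - 1 by omega)⟩⟩

end PathCount

section Book
variable {t p q : ℕ}

lemma book_adj_rootlets : (bookGraph t p q).Adj (Sum.inl 0) (Sum.inl 1) := by
  rw [bookGraph, SimpleGraph.fromRel_adj]
  exact ⟨by simp, Or.inl trivial⟩

lemma book_adj_page (u : Fin 2) (s : Fin t) :
    (bookGraph t p q).Adj (Sum.inl u) (Sum.inr (Sum.inl s)) := by
  rw [bookGraph, SimpleGraph.fromRel_adj]
  exact ⟨by simp, Or.inl trivial⟩

lemma book_adj_pleaf (i : Fin p) :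
    (bookGraph t p q).Adj (Sum.inl 0) (Sum.inr (Sum.inr (Sum.inl i))) := by
  rw [bookGraph, SimpleGraph.fromRel_adj]
  exact ⟨by simp, Or.inl rfl⟩

lemma book_adj_qleaf (i : Fin q) :
    (bookGraph t p q).Adj (Sum.inl 1) (Sum.inr (Sum.inr (Sum.inr i))) := by
  rw [bookGraph, SimpleGraph.fromRel_adj]
  exact ⟨by simp, Or.inl rfl⟩

end Book

section BookMain
variable {n k : ℕ}

lemma book_not_new (hk : 2 ≤ k) (hn : k + 3 ≤ n) {t p q : ℕ}
    (htpq : 3 ≤ 2 * t + p + q)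
    (G0 : (kiteGraph n k).Subgraph) (f : G0.coe ≃g bookGraph t p q)
    (hL : (⟨n-1, by omega⟩ : Fin n) ∈ G0.verts) : False := by
  set L : G0.verts := ⟨⟨n-1, by omega⟩, hL⟩ with hLdef
  set g := f.symm with hgdef
  have hLval : ((L : Fin n) : ℕ) = n - 1 := rfl
  have hgx : g (f L) = L := RelIso.symm_apply_apply f L
  have gadj : ∀ a b, (bookGraph t p q).Adj a b → G0.Adj ↑(g a) ↑(g b) := by
    intro a b h
    have := g.map_adj_iff.2 h
    rwa [SimpleGraph.Subgraph.coe_adj] at this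
  have N1 : ∀ a, (bookGraph t p q).Adj a (f L) → ((g a : Fin n) : ℕ) = n - 2 := by
    intro a ha
    have h := gadj a (f L) ha
    rw [hgx] at h
    have h2 := kite_adj_high (k := k) (G0.adj_sub h.symm) (by rw [hLval]; omega)
    have hlt := (g a : Fin n).isLt
    omega
  have N1' : ∀ a b, (bookGraph t p q).Adj a (f L) → (bookGraph t p q).Adj b (f L) → a = b := by
    intro a b ha hb
    exact g.injective (Subtype.ext (Fin.ext (by rw [N1 a ha, N1 b hb])))
  have no3 : ∀ y a b c, (bookGraph t p q).Adj a y → (bookGraph t p q).Adj b y →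
      (bookGraph t p q).Adj c y → a ≠ b → a ≠ c → b ≠ c →
      k ≤ ((g y : Fin n) : ℕ) → False := by
    intro y a b c hay hby hcy hab hac hbc hky
    have h1 := kite_adj_high (k := k) (G0.adj_sub (gadj a y hay).symm) hky
    have h2 := kite_adj_high (k := k) (G0.adj_sub (gadj b y hby).symm) hky
    have h3 := kite_adj_high (k := k) (G0.adj_sub (gadj c y hcy).symm) hky
    have dab : ((g a : Fin n) : ℕ) ≠ ((g b : Fin n) : ℕ) :=
      fun hval => hab (g.injective (Subtype.ext (Fin.ext hval)))
    have dac : ((g a : Fin n) : ℕ) ≠ ((g c : Fin n) : ℕ) :=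
      fun hval => hac (g.injective (Subtype.ext (Fin.ext hval)))
    have dbc : ((g b : Fin n) : ℕ) ≠ ((g c : Fin n) : ℕ) :=
      fun hval => hbc (g.injective (Subtype.ext (Fin.ext hval)))
    omega
  rcases hfl : f L with u | s | i | i
  · -- rootlet
    rw [hfl] at hgx N1 N1'
    fin_cases u
    · -- rootlet inl 0
      by_cases ht : 0 < t
      · exact absurd (N1' (Sum.inl 1) (Sum.inr (Sum.inl ⟨0, ht⟩))
          book_adj_rootlets.symm (book_adj_page 0 ⟨0, ht⟩).symm) (by simp)
      by_cases hp : 0 < p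
      · exact absurd (N1' (Sum.inl 1) (Sum.inr (Sum.inr (Sum.inl ⟨0, hp⟩)))
          book_adj_rootlets.symm (book_adj_pleaf ⟨0, hp⟩).symm) (by simp)
      have hq : 3 ≤ q := by omega
      have e1 := N1 (Sum.inl 1) book_adj_rootlets.symm
      exact no3 (Sum.inl 1) (Sum.inl 0) (Sum.inr (Sum.inr (Sum.inr ⟨0, by omega⟩)))
        (Sum.inr (Sum.inr (Sum.inr ⟨1, by omega⟩)))
        book_adj_rootlets (book_adj_qleaf _).symm (book_adj_qleaf _).symm
        (by simp) (by simp) (by simp [Fin.ext_iff]) (by rw [e1]; omega)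
    · -- rootlet inl 1
      by_cases ht : 0 < t
      · exact absurd (N1' (Sum.inl 0) (Sum.inr (Sum.inl ⟨0, ht⟩))
          book_adj_rootlets (book_adj_page 1 ⟨0, ht⟩).symm) (by simp)
      by_cases hq : 0 < q
      · exact absurd (N1' (Sum.inl 0) (Sum.inr (Sum.inr (Sum.inr ⟨0, hq⟩)))
          book_adj_rootlets (book_adj_qleaf ⟨0, hq⟩).symm) (by simp)
      have hp : 3 ≤ p := by omega
      have e1 := N1 (Sum.inl 0) book_adj_rootlets
      exact no3 (Sum.inl 0) (Sum.inl 1) (Sum.inr (Sum.inr (Sum.inl ⟨0, by omega⟩)))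
        (Sum.inr (Sum.inr (Sum.inl ⟨1, by omega⟩)))
        book_adj_rootlets.symm (book_adj_pleaf _).symm (book_adj_pleaf _).symm
        (by simp) (by simp) (by simp [Fin.ext_iff]) (by rw [e1]; omega)
  · -- page
    rw [hfl] at N1'
    exact absurd (N1' (Sum.inl 0) (Sum.inl 1) (book_adj_page 0 s) (book_adj_page 1 s))
      (by simp)
  · -- p-leaf
    rw [hfl] at hgx N1 N1'
    have hp : 0 < p := i.pos
    have e0 := N1 (Sum.inl 0) (book_adj_pleaf i)
    by_cases ht : 0 < t
    · exact no3 (Sum.inl 0) (Sum.inl 1) (Sum.inr (Sum.inl ⟨0, ht⟩))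
        (Sum.inr (Sum.inr (Sum.inl i)))
        book_adj_rootlets.symm (book_adj_page 0 _).symm (book_adj_pleaf i).symm
        (by simp) (by simp) (by simp) (by rw [e0]; omega)
    by_cases hp2 : 2 ≤ p
    · exact no3 (Sum.inl 0) (Sum.inl 1) (Sum.inr (Sum.inr (Sum.inl ⟨0, by omega⟩)))
        (Sum.inr (Sum.inr (Sum.inl ⟨1, by omega⟩)))
        book_adj_rootlets.symm (book_adj_pleaf _).symm (book_adj_pleaf _).symm
        (by simp) (by simp) (by simp [Fin.ext_iff]) (by rw [e0]; omega)
    have hq : 2 ≤ q := by omega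
    have h01 := gadj (Sum.inl 1) (Sum.inl 0) book_adj_rootlets.symm
    have hkh := kite_adj_high (k := k) (G0.adj_sub h01.symm) (by rw [e0]; omega)
    rw [e0] at hkh
    have hlt := (g (Sum.inl 1) : Fin n).isLt
    rcases hkh with h | h
    · have hval : ((g (Sum.inl 1) : Fin n) : ℕ) = n - 1 := by omega
      have hgL : g (Sum.inl 1) = L := Subtype.ext (Fin.ext (by rw [hval, hLval]))
      rw [← hgx] at hgL
      exact absurd (g.injective hgL) (by simp)
    · exact no3 (Sum.inl 1) (Sum.inl 0) (Sum.inr (Sum.inr (Sum.inr ⟨0, by omega⟩)))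
        (Sum.inr (Sum.inr (Sum.inr ⟨1, by omega⟩)))
        book_adj_rootlets (book_adj_qleaf _).symm (book_adj_qleaf _).symm
        (by simp) (by simp) (by simp [Fin.ext_iff]) (by omega)
  · -- q-leaf
    rw [hfl] at hgx N1 N1'
    have hq : 0 < q := i.pos
    have e1 := N1 (Sum.inl 1) (book_adj_qleaf i)
    by_cases ht : 0 < t
    · exact no3 (Sum.inl 1) (Sum.inl 0) (Sum.inr (Sum.inl ⟨0, ht⟩))
        (Sum.inr (Sum.inr (Sum.inr i)))
        book_adj_rootlets (book_adj_page 1 _).symm (book_adj_qleaf i).symm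
        (by simp) (by simp) (by simp) (by rw [e1]; omega)
    by_cases hq2 : 2 ≤ q
    · exact no3 (Sum.inl 1) (Sum.inl 0) (Sum.inr (Sum.inr (Sum.inr ⟨0, by omega⟩)))
        (Sum.inr (Sum.inr (Sum.inr ⟨1, by omega⟩)))
        book_adj_rootlets (book_adj_qleaf _).symm (book_adj_qleaf _).symm
        (by simp) (by simp) (by simp [Fin.ext_iff]) (by rw [e1]; omega)
    have hp : 2 ≤ p := by omega
    have h01 := gadj (Sum.inl 0) (Sum.inl 1) book_adj_rootlets
    have hkh := kite_adj_high (k := k) (G0.adj_sub h01.symm) (by rw [e1]; omega)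
    rw [e1] at hkh
    have hlt := (g (Sum.inl 0) : Fin n).isLt
    rcases hkh with h | h
    · have hval : ((g (Sum.inl 0) : Fin n) : ℕ) = n - 1 := by omega
      have hgL : g (Sum.inl 0) = L := Subtype.ext (Fin.ext (by rw [hval, hLval]))
      rw [← hgx] at hgL
      exact absurd (g.injective hgL) (by simp)
    · exact no3 (Sum.inl 0) (Sum.inl 1) (Sum.inr (Sum.inr (Sum.inl ⟨0, by omega⟩)))
        (Sum.inr (Sum.inr (Sum.inl ⟨1, by omega⟩)))
        book_adj_rootlets.symm (book_adj_pleaf _).symm (book_adj_pleaf _).symm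
        (by simp) (by simp) (by simp [Fin.ext_iff]) (by omega)

end BookMain

section Final
variable {n k : ℕ}

lemma book_count (hk : 2 ≤ k) (hn : k + 3 ≤ n) {t p q : ℕ} (htpq : 3 ≤ 2 * t + p + q) :
    copyCountSubgraphs (bookGraph t p q) (kiteGraph n k) =
      copyCountSubgraphs (bookGraph t p q) (kiteGraph (n-1) k) := by
  rw [copyCount_split (show 1 ≤ n by omega) (bookGraph t p q)]
  haveI hempty : IsEmpty {G0 : (kiteGraph n k).Subgraph //
      Nonempty (G0.coe ≃g bookGraph t p q) ∧ (⟨n-1, by omega⟩ : Fin n) ∈ G0.verts} := by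
    constructor
    rintro ⟨G0, ⟨f⟩, hm⟩
    exact book_not_new hk hn htpq G0 f hm
  rw [Nat.card_of_isEmpty, add_zero]

end Final


/-- For `k ≥ 2` and `n ≥ k + 3`, attaching a new leaf to the end of the
pendant path of `Ki(n−1,k)` (yielding `Ki(n,k)`) creates exactly one new copy of each of
`P₂`, `P₃`, `P₄`, and no new copy of any generalized book `B_t(p,q)` with
`2t + p + q ≥ 3` and `(t,p,q) ≠ (0,1,1)`. -/
theorem kiteGraph_addLeaf_new_copies {n k : ℕ} (hk : 2 ≤ k) (hn : k + 3 ≤ n) :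
    copyCountSubgraphs (pathGraph 2) (kiteGraph n k) = copyCountSubgraphs (pathGraph 2) (kiteGraph (n - 1) k) + 1 ∧
    copyCountSubgraphs (pathGraph 3) (kiteGraph n k) = copyCountSubgraphs (pathGraph 3) (kiteGraph (n - 1) k) + 1 ∧
    copyCountSubgraphs (pathGraph 4) (kiteGraph n k) = copyCountSubgraphs (pathGraph 4) (kiteGraph (n - 1) k) + 1 ∧
    ∀ t p q : ℕ, 3 ≤ 2 * t + p + q → (t, p, q) ≠ (0, 1, 1) →
      copyCountSubgraphs (bookGraph t p q) (kiteGraph n k) =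
        copyCountSubgraphs (bookGraph t p q) (kiteGraph (n - 1) k) := by
  refine ⟨?_, ?_, ?_, ?_⟩
  · exact path_count hk hn (by omega) (by omega)
  · exact path_count hk hn (by omega) (by omega)
  · exact path_count hk hn (by omega) (by omega)
  · intro t p q h3 _
    exact book_count hk hn h3
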